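/- arXiv:1205.3906 — 4 statements merged into one kernel-verified Lean document; each statement's English description precedes it below -/
import Mathlib

section
/- Fix n ≥ 1, and for i = 1,…,n fix y_i ∈ ℝ^{n_i} and a real n_i×r matrix X_i; let σ² > 0 and let D be a symmetric positive definite r×r matrix. Set W_i := ((1/σ²)·X_iᵀX_i + D^{−1})^{−1} D^{−1} for each i, and assume the matrix M := ∑_{i=1}^n { (I − W_i)ᵀ D^{−1} (I − W_i) + (1/σ²)·W_iᵀ X_iᵀ X_i W_i } is invertible. Define one cycle of the coordinate updates as the map taking current values (m_1,…,m_n) ∈ (ℝ^r)^n of the variational means μ^q_{α̃_i} to: Σ^q_β := M^{−1}; μ^q_β := Σ^q_β ∑_{i=1}^n [ (1/σ²)·W_iᵀ X_iᵀ y_i + { D^{−1}(I − W_i) − (1/σ²)·X_iᵀX_iW_i }ᵀ m_i ]; then for each i, Σ^q_{α̃_i} := (D^{−1} + (1/σ²)·X_iᵀX_i)^{−1} and μ^q_{α̃_i} := Σ^q_{α̃_i} [ (1/σ²)·X_iᵀ y_i + { D^{−1}(I − W_i) − (1/σ²)·X_iᵀX_iW_i } μ^q_β ]. Then for each i one has D^{−1}(I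 − W_i) − (1/σ²)·X_iᵀX_iW_i = 0, so the output of one cycle does not depend on the input (m_1,…,m_n): μ^q_β = M^{−1} ∑_{i=1}^n (1/σ²)·W_iᵀ X_iᵀ y_i and μ^q_{α̃_i} = (D^{−1} + (1/σ²)·X_iᵀX_i)^{−1} (1/σ²)·X_iᵀ y_i for every input; consequently the iterative scheme converges after a single cycle (the values produced by one cycle form a fixed point of the cycle map). -/
/-!
With `A_i = (1/σ²) X_iᵀX_i + D⁻¹` and `W_i = A_i⁻¹ D⁻¹`, the coupling coefficient
`D⁻¹(I - W_i) - (1/σ²) X_iᵀX_i W_i` equals `D⁻¹ - A_i W_i = D⁻¹ - D⁻¹ = 0`, as `A_i` is positive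
definite and hence invertible. With the coupling gone, both updates of a cycle ignore their input,
so the output of one cycle is a fixed point of the cycle map.
-/

open Matrix

namespace Matrix

variable {m k : Type*} [Fintype m] [DecidableEq m]

theorem mul_one_sub_inv_add_mul {R : Type*} [CommRing R] {G B : Matrix m m R} (h : IsUnit (G + B)) :
    B * (1 - (G + B)⁻¹ * B) = G * ((G + B)⁻¹ * B) := by
  rw [← sub_eq_zero, mul_sub, mul_one, sub_sub, ← add_mul, add_comm B G, ← mul_assoc,
    mul_nonsing_inv _ ((isUnit_iff_isUnit_det _).mp h), one_mul, sub_self]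

theorem isUnit_smul_gram_add_inv [Fintype k] (X : Matrix k m ℝ) {c : ℝ} (hc : 0 ≤ c)
    {D : Matrix m m ℝ} (hD : D.PosDef) : IsUnit (c • (Xᵀ * X) + D⁻¹) := by
  have hG : (c • (Xᵀ * X)).PosSemidef := by
    simpa only [conjTranspose_eq_transpose_of_trivial] using
      (posSemidef_conjTranspose_mul_self X).smul hc
  exact (hD.inv.posSemidef_add hG).isUnit

end Matrix

theorem algorithm1_one_cycle_convergence_general
    {n r : ℕ} (ni : Fin n → ℕ)
    (y : (i : Fin n) → Fin (ni i) → ℝ)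
    (X : (i : Fin n) → Matrix (Fin (ni i)) (Fin r) ℝ)
    (σ2 : ℝ) (hσ2 : 0 < σ2)
    (D : Matrix (Fin r) (Fin r) ℝ) (hD : D.PosDef)
    (W : Fin n → Matrix (Fin r) (Fin r) ℝ)
    (hW : ∀ i, W i = ((1 / σ2) • ((X i)ᵀ * X i) + D⁻¹)⁻¹ * D⁻¹)
    (M : Matrix (Fin r) (Fin r) ℝ)
    -- the fixed-effect mean produced by one cycle, as a function of the input means
    (μβ : (Fin n → Fin r → ℝ) → Fin r → ℝ)
    (hμβ : ∀ m : Fin n → Fin r → ℝ,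
      μβ m = M⁻¹ *ᵥ ∑ i, ((1 / σ2) • ((W i)ᵀ *ᵥ ((X i)ᵀ *ᵥ y i)) +
        (D⁻¹ * (1 - W i) - (1 / σ2) • ((X i)ᵀ * X i * W i))ᵀ *ᵥ m i))
    -- the random-effect means produced by one cycle, as a function of the input means
    (μα : (Fin n → Fin r → ℝ) → Fin n → Fin r → ℝ)
    (hμα : ∀ (m : Fin n → Fin r → ℝ) (i : Fin n),
      μα m i = (D⁻¹ + (1 / σ2) • ((X i)ᵀ * X i))⁻¹ *ᵥ
        ((1 / σ2) • ((X i)ᵀ *ᵥ y i) +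
          (D⁻¹ * (1 - W i) - (1 / σ2) • ((X i)ᵀ * X i * W i)) *ᵥ μβ m)) :
    (∀ i, D⁻¹ * (1 - W i) - (1 / σ2) • ((X i)ᵀ * X i * W i) = 0) ∧
    (∀ m : Fin n → Fin r → ℝ,
      μβ m = M⁻¹ *ᵥ ∑ i, (1 / σ2) • ((W i)ᵀ *ᵥ ((X i)ᵀ *ᵥ y i))) ∧
    (∀ (m : Fin n → Fin r → ℝ) (i : Fin n),
      μα m i = (D⁻¹ + (1 / σ2) • ((X i)ᵀ * X i))⁻¹ *ᵥ ((1 / σ2) • ((X i)ᵀ *ᵥ y i))) ∧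
    (∀ m : Fin n → Fin r → ℝ, μα (μα m) = μα m ∧ μβ (μα m) = μβ m) := by
  have hcoupling : ∀ i, D⁻¹ * (1 - W i) - (1 / σ2) • ((X i)ᵀ * X i * W i) = 0 := fun i => by
    rw [sub_eq_zero, ← smul_mul_assoc, hW i]
    exact mul_one_sub_inv_add_mul (isUnit_smul_gram_add_inv (X i) (by positivity) hD)
  have hβ : ∀ m : Fin n → Fin r → ℝ,
      μβ m = M⁻¹ *ᵥ ∑ i, (1 / σ2) • ((W i)ᵀ *ᵥ ((X i)ᵀ *ᵥ y i)) := fun m => by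
    simp only [hμβ m, hcoupling, transpose_zero, zero_mulVec, add_zero]
  have hα : ∀ (m : Fin n → Fin r → ℝ) (i : Fin n),
      μα m i = (D⁻¹ + (1 / σ2) • ((X i)ᵀ * X i))⁻¹ *ᵥ ((1 / σ2) • ((X i)ᵀ *ᵥ y i)) :=
    fun m i => by simp only [hμα m i, hcoupling, zero_mulVec, add_zero]
  exact ⟨hcoupling, hβ, hα, fun m => ⟨funext fun i => by rw [hα, hα], by rw [hβ, hβ]⟩⟩

/-- **Algorithm 1 converges in a single cycle under the optimal tuning matrices.**
With `W_i = ((1/σ²) X_iᵀX_i + D⁻¹)⁻¹ D⁻¹`, the cross-coupling coefficients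
`D⁻¹(I - W_i) - (1/σ²) X_iᵀX_i W_i` vanish, so the output of one cycle of the coordinate
updates of Algorithm 1 does not depend on the input means `(m_1, …, m_n)`, and the values
produced by one cycle form a fixed point of the cycle map. -/
theorem algorithm1_one_cycle_convergence
    {n r : ℕ} (ni : Fin n → ℕ) (hn : 1 ≤ n)
    (y : (i : Fin n) → Fin (ni i) → ℝ)
    (X : (i : Fin n) → Matrix (Fin (ni i)) (Fin r) ℝ)
    (σ2 : ℝ) (hσ2 : 0 < σ2)
    (D : Matrix (Fin r) (Fin r) ℝ) (hD : D.PosDef)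
    (W : Fin n → Matrix (Fin r) (Fin r) ℝ)
    (hW : ∀ i, W i = ((1 / σ2) • ((X i)ᵀ * X i) + D⁻¹)⁻¹ * D⁻¹)
    (M : Matrix (Fin r) (Fin r) ℝ)
    (hM : M = ∑ i, ((1 - W i)ᵀ * D⁻¹ * (1 - W i) + (1 / σ2) • ((W i)ᵀ * (X i)ᵀ * X i * W i)))
    (hMinv : IsUnit M.det)
    -- the fixed-effect mean produced by one cycle, as a function of the input means
    (μβ : (Fin n → Fin r → ℝ) → Fin r → ℝ)
    (hμβ : ∀ m : Fin n → Fin r → ℝ,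
      μβ m = M⁻¹ *ᵥ ∑ i, ((1 / σ2) • ((W i)ᵀ *ᵥ ((X i)ᵀ *ᵥ y i)) +
        (D⁻¹ * (1 - W i) - (1 / σ2) • ((X i)ᵀ * X i * W i))ᵀ *ᵥ m i))
    -- the random-effect means produced by one cycle, as a function of the input means
    (μα : (Fin n → Fin r → ℝ) → Fin n → Fin r → ℝ)
    (hμα : ∀ (m : Fin n → Fin r → ℝ) (i : Fin n),
      μα m i = (D⁻¹ + (1 / σ2) • ((X i)ᵀ * X i))⁻¹ *ᵥ
        ((1 / σ2) • ((X i)ᵀ *ᵥ y i) +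
          (D⁻¹ * (1 - W i) - (1 / σ2) • ((X i)ᵀ * X i * W i)) *ᵥ μβ m)) :
    (∀ i, D⁻¹ * (1 - W i) - (1 / σ2) • ((X i)ᵀ * X i * W i) = 0) ∧
    (∀ m : Fin n → Fin r → ℝ,
      μβ m = M⁻¹ *ᵥ ∑ i, (1 / σ2) • ((W i)ᵀ *ᵥ ((X i)ᵀ *ᵥ y i))) ∧
    (∀ (m : Fin n → Fin r → ℝ) (i : Fin n),
      μα m i = (D⁻¹ + (1 / σ2) • ((X i)ᵀ * X i))⁻¹ *ᵥ ((1 / σ2) • ((X i)ᵀ *ᵥ y i))) ∧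
    (∀ m : Fin n → Fin r → ℝ, μα (μα m) = μα m ∧ μβ (μα m) = μβ m) :=
  algorithm1_one_cycle_convergence_general ni y X σ2 hσ2 D hD W hW M μβ hμβ μα hμα
end

section
/- Let (α, 𝒜, μ) be a measure space with μ σ-finite, let t : α → ℝ^k be measurable, and let λ₀ ∈ ℝ^k be such that there is an open neighborhood U of λ₀ with ∫ exp(⟨λ, t(x)⟩) dμ(x) < ∞ for all λ ∈ U. Define h : U → ℝ by h(λ) = log ∫ exp(⟨λ, t(x)⟩) dμ(x). Then h is differentiable at λ₀, each component t_i is integrable with respect to the tilted density w(x) = exp(⟨λ₀, t(x)⟩ − h(λ₀)), and the gradient satisfies ∇h(λ₀)_i = ∫ t_i(x) · exp(⟨λ₀, t(x)⟩ − h(λ₀)) dμ(x) for i = 1,…,k; that is, ∇h(λ₀) equals the mean of the sufficient statistic t under the exponential-family density x ↦ exp(⟨λ₀, t(x)⟩ − h(λ₀)) with respect to μ. -/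
/-!
Differentiating under the integral sign, `Z(λ) = ∫ exp ⟨λ, t⟩ dμ` has derivative
`∫ exp ⟨λ₀, t⟩ • ⟨·, t⟩ dμ` at `λ₀`, and `∇ log Z = ∇Z / Z` is the mean of `t` under the
tilted density. The domination comes from the corners of a cube around `λ₀` inside `U`:
for `‖λ - λ₀‖∞ ≤ δ`,
`‖t‖₁ exp ⟨λ, t⟩ ≤ δ⁻¹ exp (⟨λ₀, t⟩ + 2δ‖t‖₁) ≤ δ⁻¹ ∑_σ exp ⟨λ₀ + σ, t⟩`,
where `σ` ranges over the `2^k` vectors with entries `±2δ`, and each summand is integrable.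
-/

open MeasureTheory Matrix Filter Topology Finset Real Metric

section ExponentialFamily

variable {ι : Type*} [Fintype ι]

noncomputable def dotProductCLM (c : ι → ℝ) : (ι → ℝ) →L[ℝ] ℝ :=
  ∑ i, c i • ContinuousLinearMap.proj i

@[simp]
lemma dotProductCLM_apply (c v : ι → ℝ) : dotProductCLM c v = v ⬝ᵥ c := by
  simp [dotProductCLM, dotProduct, mul_comm]

lemma continuous_dotProductCLM : Continuous (dotProductCLM : (ι → ℝ) → (ι → ℝ) →L[ℝ] ℝ) :=
  continuous_finsetSum _ fun i _ => (continuous_apply i).smul continuous_const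

lemma norm_dotProductCLM_le (c : ι → ℝ) : ‖dotProductCLM c‖ ≤ ∑ i, |c i| := by
  refine ContinuousLinearMap.opNorm_le_bound _ (sum_nonneg fun i _ => abs_nonneg _) fun v => ?_
  rw [dotProductCLM_apply, sum_mul]
  refine (norm_sum_le _ _).trans (sum_le_sum fun i _ => ?_)
  rw [norm_mul, mul_comm]
  exact mul_le_mul_of_nonneg_left (norm_le_pi_norm v i) (abs_nonneg _)

lemma hasFDerivAt_exp_dotProduct (c l : ι → ℝ) :
    HasFDerivAt (fun l : ι → ℝ => exp (l ⬝ᵥ c)) (exp (l ⬝ᵥ c) • dotProductCLM c) l := by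
  simpa using (dotProductCLM c).hasFDerivAt.exp

section CubeVertices

variable [DecidableEq ι]

noncomputable def cubeVertices (r : ℝ) : Finset (ι → ℝ) :=
  Fintype.piFinset fun _ => {r, -r}

lemma norm_le_of_mem_cubeVertices {r : ℝ} {σ : ι → ℝ} (hσ : σ ∈ cubeVertices r) : ‖σ‖ ≤ |r| := by
  refine (pi_norm_le_iff_of_nonneg (abs_nonneg r)).2 fun j => ?_
  have hσj := Fintype.mem_piFinset.1 hσ j
  simp only [mem_insert, mem_singleton] at hσj
  rcases hσj with h | h <;> simp [h]

lemma exp_mul_sum_abs_le_sum_cubeVertices {r : ℝ} (hr : r ≠ 0) (c : ι → ℝ) :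
    exp (r * ∑ j, |c j|) ≤ ∑ σ ∈ cubeVertices r, exp (σ ⬝ᵥ c) := by
  have hr' : r ≠ -r := fun h => hr (by linarith)
  calc exp (r * ∑ j, |c j|) = ∏ j, exp (r * |c j|) := by rw [mul_sum, exp_sum]
    _ ≤ ∏ j, ∑ s ∈ {r, -r}, exp (s * c j) := by
        refine prod_le_prod (fun _ _ => (exp_pos _).le) fun j _ => ?_
        rw [sum_pair hr']
        rcases abs_cases (c j) with ⟨h, _⟩ | ⟨h, _⟩ <;> rw [h]
        · exact le_add_of_nonneg_right (exp_pos _).le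
        · rw [mul_neg, ← neg_mul]
          exact le_add_of_nonneg_left (exp_pos _).le
    _ = ∑ σ ∈ cubeVertices r, exp (σ ⬝ᵥ c) := by
        simp_rw [cubeVertices, prod_univ_sum, dotProduct, exp_sum]

lemma sum_abs_mul_exp_dotProduct_le {δ : ℝ} (hδ : 0 < δ) {l₀ l : ι → ℝ}
    (hl : dist l l₀ ≤ δ) (c : ι → ℝ) :
    (∑ j, |c j|) * exp (l ⬝ᵥ c) ≤ δ⁻¹ * ∑ σ ∈ cubeVertices (2 * δ), exp ((l₀ + σ) ⬝ᵥ c) := by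
  set S := ∑ j, |c j|
  have hdot : l ⬝ᵥ c ≤ l₀ ⬝ᵥ c + δ * S := by
    have hdiff : (l - l₀) ⬝ᵥ c ≤ δ * S := by
      rw [mul_sum]
      refine sum_le_sum fun j _ => (le_abs_self _).trans ?_
      rw [abs_mul]
      gcongr
      exact (dist_le_pi_dist l l₀ j).trans hl
    rw [sub_dotProduct] at hdiff
    linarith
  have hS : δ * S ≤ exp (δ * S) := by linarith [add_one_le_exp (δ * S)]
  calc S * exp (l ⬝ᵥ c) = δ⁻¹ * ((δ * S) * exp (l ⬝ᵥ c)) := by field_simp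
    _ ≤ δ⁻¹ * (exp (δ * S) * exp (l₀ ⬝ᵥ c + δ * S)) := by gcongr
    _ = δ⁻¹ * (exp (l₀ ⬝ᵥ c) * exp (2 * δ * S)) := by
        rw [← exp_add, ← exp_add]; ring_nf
    _ ≤ δ⁻¹ * (exp (l₀ ⬝ᵥ c) * ∑ σ ∈ cubeVertices (2 * δ), exp (σ ⬝ᵥ c)) := by
        gcongr
        exact exp_mul_sum_abs_le_sum_cubeVertices (by positivity) c
    _ = δ⁻¹ * ∑ σ ∈ cubeVertices (2 * δ), exp ((l₀ + σ) ⬝ᵥ c) := by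
        simp_rw [mul_sum, add_dotProduct, exp_add]

end CubeVertices

lemma norm_exp_dotProduct_smul_dotProductCLM_le (c l : ι → ℝ) :
    ‖exp (l ⬝ᵥ c) • dotProductCLM c‖ ≤ (∑ j, |c j|) * exp (l ⬝ᵥ c) := by
  rw [norm_smul, norm_of_nonneg (exp_pos _).le, mul_comm]
  gcongr
  exact norm_dotProductCLM_le c

variable {α : Type*} [MeasurableSpace α] {μ : Measure α} {t : α → ι → ℝ} {l₀ : ι → ℝ}

noncomputable def logPartition (μ : Measure α) (t : α → ι → ℝ) (l : ι → ℝ) : ℝ :=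
  log (∫ x, exp (l ⬝ᵥ t x) ∂μ)

lemma exists_integrable_bound_sum_abs_mul_exp_dotProduct
    (hint : ∀ᶠ l in 𝓝 l₀, Integrable (fun x => exp (l ⬝ᵥ t x)) μ) :
    ∃ δ > 0, ∃ g : α → ℝ, Integrable g μ ∧
      ∀ x, ∀ l ∈ ball l₀ δ, (∑ j, |t x j|) * exp (l ⬝ᵥ t x) ≤ g x := by
  classical
  obtain ⟨ε, hε, hεint⟩ := Metric.eventually_nhds_iff.1 hint
  refine ⟨ε / 3, by positivity,
    fun x => (ε / 3)⁻¹ * ∑ σ ∈ cubeVertices (2 * (ε / 3)), exp ((l₀ + σ) ⬝ᵥ t x), ?_,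
    fun x l hl => sum_abs_mul_exp_dotProduct_le (by positivity) (mem_ball.1 hl).le (t x)⟩
  refine (integrable_finsetSum _ fun σ hσ => hεint ?_).const_mul _
  rw [dist_eq_norm, add_sub_cancel_left]
  calc ‖σ‖ ≤ |2 * (ε / 3)| := norm_le_of_mem_cubeVertices hσ
    _ < ε := by rw [abs_of_pos (by positivity)]; linarith

lemma integrable_exp_dotProduct_smul_dotProductCLM (ht : AEMeasurable t μ)
    (hint : ∀ᶠ l in 𝓝 l₀, Integrable (fun x => exp (l ⬝ᵥ t x)) μ) :
    Integrable (fun x => exp (l₀ ⬝ᵥ t x) • dotProductCLM (t x)) μ := by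
  obtain ⟨δ, hδ, g, hg, hbound⟩ := exists_integrable_bound_sum_abs_mul_exp_dotProduct hint
  have hcont : Continuous fun c : ι → ℝ => exp (l₀ ⬝ᵥ c) • dotProductCLM c :=
    (continuous_const.dotProduct continuous_id).rexp.smul continuous_dotProductCLM
  exact hg.mono' (hcont.comp_aestronglyMeasurable ht.aestronglyMeasurable) (ae_of_all _ fun x =>
    (norm_exp_dotProduct_smul_dotProductCLM_le _ _).trans (hbound x l₀ (mem_ball_self hδ)))

lemma hasFDerivAt_integral_exp_dotProduct (ht : AEMeasurable t μ)
    (hint : ∀ᶠ l in 𝓝 l₀, Integrable (fun x => exp (l ⬝ᵥ t x)) μ) :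
    HasFDerivAt (fun l => ∫ x, exp (l ⬝ᵥ t x) ∂μ)
      (∫ x, exp (l₀ ⬝ᵥ t x) • dotProductCLM (t x) ∂μ) l₀ := by
  obtain ⟨δ, hδ, g, hg, hbound⟩ := exists_integrable_bound_sum_abs_mul_exp_dotProduct hint
  exact hasFDerivAt_integral_of_dominated_of_fderiv_le (ball_mem_nhds l₀ hδ)
    (hint.mono fun _ hl => hl.aestronglyMeasurable) hint.self_of_nhds
    (integrable_exp_dotProduct_smul_dotProductCLM ht hint).aestronglyMeasurable
    (ae_of_all _ fun x l hl =>
      (norm_exp_dotProduct_smul_dotProductCLM_le _ _).trans (hbound x l hl))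
    hg (ae_of_all _ fun x l _ => hasFDerivAt_exp_dotProduct (t x) l)

lemma hasFDerivAt_logPartition (ht : AEMeasurable t μ)
    (hint : ∀ᶠ l in 𝓝 l₀, Integrable (fun x => exp (l ⬝ᵥ t x)) μ) :
    HasFDerivAt (logPartition μ t)
      (∫ x, exp (l₀ ⬝ᵥ t x - logPartition μ t l₀) • dotProductCLM (t x) ∂μ) l₀ := by
  rcases eq_zero_or_neZero μ with rfl | hμ
  · have hzero : logPartition (0 : Measure α) t = fun _ => 0 :=
      funext fun _ => by simp [logPartition]
    simpa [hzero] using hasFDerivAt_const (𝕜 := ℝ) (0 : ℝ) l₀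
  have hZ : 0 < ∫ x, exp (l₀ ⬝ᵥ t x) ∂μ := integral_exp_pos hint.self_of_nhds
  refine ((hasFDerivAt_integral_exp_dotProduct ht hint).log hZ.ne').congr_fderiv ?_
  rw [← integral_smul]
  refine integral_congr_ae (ae_of_all _ fun x => ?_)
  simp only [logPartition, exp_sub, exp_log hZ, smul_smul, div_eq_inv_mul]

end ExponentialFamily

theorem logNormalizer_gradient_general {α : Type*} [MeasurableSpace α] (μ : Measure α)
    {k : ℕ} (t : α → Fin k → ℝ) (ht : Measurable t)
    (U : Set (Fin k → ℝ)) (hU : IsOpen U) (l₀ : Fin k → ℝ) (hl₀ : l₀ ∈ U)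
    (hint : ∀ l ∈ U, Integrable (fun x => Real.exp (l ⬝ᵥ t x)) μ)
    (h : (Fin k → ℝ) → ℝ)
    (hh : ∀ l ∈ U, h l = Real.log (∫ x, Real.exp (l ⬝ᵥ t x) ∂μ)) :
    DifferentiableAt ℝ h l₀ ∧
    (∀ i, Integrable (fun x => t x i * Real.exp (l₀ ⬝ᵥ t x - h l₀)) μ) ∧
    (∀ i, fderiv ℝ h l₀ (Pi.single i 1) =
      ∫ x, t x i * Real.exp (l₀ ⬝ᵥ t x - h l₀) ∂μ) := by
  have hU₀ : U ∈ 𝓝 l₀ := hU.mem_nhds hl₀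
  have hint₀ := eventually_of_mem hU₀ hint
  have hD : HasFDerivAt h (∫ x, exp (l₀ ⬝ᵥ t x - h l₀) • dotProductCLM (t x) ∂μ) l₀ := by
    rw [hh l₀ hl₀]
    exact (hasFDerivAt_logPartition ht.aemeasurable hint₀).congr_of_eventuallyEq
      (eventually_of_mem hU₀ hh)
  have hI : Integrable (fun x => exp (l₀ ⬝ᵥ t x - h l₀) • dotProductCLM (t x)) μ := by
    simpa only [Pi.smul_def, smul_smul, ← exp_add, neg_add_eq_sub] using
      (integrable_exp_dotProduct_smul_dotProductCLM ht.aemeasurable hint₀).smul (exp (-h l₀))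
  refine ⟨hD.differentiableAt, fun i => ?_, fun i => ?_⟩
  · simpa [mul_comm] using hI.apply_continuousLinearMap (Pi.single i 1)
  · rw [hD.fderiv, ContinuousLinearMap.integral_apply hI]
    simp [mul_comm]

/-- **Mean of the sufficient statistic is the gradient of the log-normalizer.**
If `h(λ) = log ∫ exp(⟨λ, t(x)⟩) dμ(x)` is finite on an open neighborhood `U` of `λ₀`,
then `h` is differentiable at `λ₀`, each `t_i` is integrable w.r.t. the tilted density
`exp(⟨λ₀, t(x)⟩ - h(λ₀))`, and `∇h(λ₀)_i = ∫ t_i(x) exp(⟨λ₀, t(x)⟩ - h(λ₀)) dμ(x)`. -/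
theorem logNormalizer_gradient {α : Type*} [MeasurableSpace α] (μ : Measure α)
    [SigmaFinite μ] {k : ℕ} (t : α → Fin k → ℝ) (ht : Measurable t)
    (U : Set (Fin k → ℝ)) (hU : IsOpen U) (l₀ : Fin k → ℝ) (hl₀ : l₀ ∈ U)
    (hint : ∀ l ∈ U, Integrable (fun x => Real.exp (l ⬝ᵥ t x)) μ)
    (h : (Fin k → ℝ) → ℝ)
    (hh : ∀ l ∈ U, h l = Real.log (∫ x, Real.exp (l ⬝ᵥ t x) ∂μ)) :
    DifferentiableAt ℝ h l₀ ∧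
    (∀ i, Integrable (fun x => t x i * Real.exp (l₀ ⬝ᵥ t x - h l₀)) μ) ∧
    (∀ i, fderiv ℝ h l₀ (Pi.single i 1) =
      ∫ x, t x i * Real.exp (l₀ ⬝ᵥ t x - h l₀) ∂μ) :=
  logNormalizer_gradient_general μ t ht U hU l₀ hl₀ hint h hh
end

section
/- Let U ⊆ ℝ^k be open, let h : U → ℝ be differentiable on U and twice differentiable at a point λ₀ ∈ U, and let H denote the Hessian matrix of h at λ₀. Let c_1,…,c_m ∈ ℝ^k be fixed vectors and define L : U → ℝ by L(λ) = ∑_{a=1}^m ⟨c_a, ∇h(λ)⟩ − (⟨λ, ∇h(λ)⟩ − h(λ)). Then L is differentiable at λ₀ with ∇L(λ₀) = H·(∑_{a=1}^m c_a − λ₀); in particular, if H is invertible, then ∇L(λ₀) = 0 if and only if λ₀ = ∑_{a=1}^m c_a. -/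
open Matrix

/-!
Writing `w = ∑ a, c a`, linearity of `Dh(λ)` gives `L(λ) = Dh(λ)(w - λ) + h(λ)`. By the product
rule its derivative in direction `v` is `D²h(λ₀)(v)(w - λ₀) - Dh(λ₀)v + Dh(λ₀)v`: the two
first-order terms cancel, leaving the Hessian applied to `w - λ₀`. When the Hessian is
invertible this vanishes exactly at `λ₀ = w`.
-/

theorem hasFDerivAt_fderiv_apply_sub_add {𝕜 E F : Type*} [NontriviallyNormedField 𝕜]
    [NormedAddCommGroup E] [NormedSpace 𝕜 E] [NormedAddCommGroup F] [NormedSpace 𝕜 F]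
    {h : E → F} {x : E} (w : E) (hh : DifferentiableAt 𝕜 h x)
    (hh' : DifferentiableAt 𝕜 (fderiv 𝕜 h) x) :
    HasFDerivAt (fun l => fderiv 𝕜 h l (w - l) + h l)
      ((fderiv 𝕜 (fderiv 𝕜 h) x).flip (w - x)) x := by
  refine ((hh'.hasFDerivAt.clm_apply ((hasFDerivAt_id x).const_sub w)).add
    hh.hasFDerivAt).congr_fderiv ?_
  ext v
  simp

theorem ContinuousLinearMap.apply_single_apply_eq_mulVec {𝕜 n : Type*} [NontriviallyNormedField 𝕜]
    [Fintype n] [DecidableEq n] (B : (n → 𝕜) →L[𝕜] (n → 𝕜) →L[𝕜] 𝕜) {H : Matrix n n 𝕜}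
    (hH : ∀ i j, H i j = B (Pi.single i 1) (Pi.single j 1)) (i : n) (w : n → 𝕜) :
    B (Pi.single i 1) w = (H *ᵥ w) i := by
  conv_lhs => rw [pi_eq_sum_univ' w]
  simp [mulVec, dotProduct, hH, mul_comm]

theorem Matrix.mulVec_eq_zero_iff_of_isUnit {K n : Type*} [Field K] [Fintype n] [DecidableEq n]
    {H : Matrix n n K} (hH : IsUnit H) {v : n → K} : H *ᵥ v = 0 ↔ v = 0 :=
  (mulVec_injective_iff_isUnit.mpr hH).eq_iff' (mulVec_zero H)

theorem lower_bound_stationary_at_vmp_update_general {k m : ℕ} (U : Set (Fin k → ℝ))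
    (h : (Fin k → ℝ) → ℝ) (l₀ : Fin k → ℝ) (hl₀ : l₀ ∈ U)
    (hdiff : ∀ l ∈ U, DifferentiableAt ℝ h l)
    (hdiff2 : DifferentiableAt ℝ (fderiv ℝ h) l₀)
    (H : Matrix (Fin k) (Fin k) ℝ)
    (hH : ∀ i j, H i j = fderiv ℝ (fderiv ℝ h) l₀ (Pi.single i 1) (Pi.single j 1))
    (c : Fin m → Fin k → ℝ)
    (L : (Fin k → ℝ) → ℝ)
    (hL : ∀ l, L l = (∑ a, fderiv ℝ h l (c a)) - (fderiv ℝ h l l - h l)) :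
    DifferentiableAt ℝ L l₀ ∧
    (∀ i, fderiv ℝ L l₀ (Pi.single i 1) = (H *ᵥ ((∑ a, c a) - l₀)) i) ∧
    (IsUnit H →
      ((∀ i, fderiv ℝ L l₀ (Pi.single i 1) = 0) ↔ l₀ = ∑ a, c a)) := by
  have hL' : L = fun l => fderiv ℝ h l ((∑ a, c a) - l) + h l := by
    ext l
    rw [hL, map_sub, map_sum]
    ring
  have hLderiv := hasFDerivAt_fderiv_apply_sub_add (∑ a, c a) (hdiff l₀ hl₀) hdiff2
  rw [← hL'] at hLderiv
  have hgrad : ∀ i, fderiv ℝ L l₀ (Pi.single i 1) = (H *ᵥ ((∑ a, c a) - l₀)) i := fun i => by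
    rw [hLderiv.fderiv, ContinuousLinearMap.flip_apply,
      ContinuousLinearMap.apply_single_apply_eq_mulVec _ hH]
  refine ⟨hLderiv.differentiableAt, hgrad, fun hunit => ?_⟩
  calc (∀ i, fderiv ℝ L l₀ (Pi.single i 1) = 0) ↔ H *ᵥ ((∑ a, c a) - l₀) = 0 := by
        simp only [hgrad, funext_iff, Pi.zero_apply]
    _ ↔ l₀ = ∑ a, c a := by rw [mulVec_eq_zero_iff_of_isUnit hunit, sub_eq_zero, eq_comm]

/-- **Stationarity of the variational lower bound at the VMP update.**
If `h` is differentiable on an open set `U ∋ λ₀`, twice differentiable at `λ₀` with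
Hessian matrix `H`, and `L(λ) = ∑_a ⟨c_a, ∇h(λ)⟩ - (⟨λ, ∇h(λ)⟩ - h(λ))` (written via
directional derivatives `⟨c, ∇h(λ)⟩ = Dh(λ)[c]`), then `L` is differentiable at `λ₀`
with gradient `H·(∑_a c_a - λ₀)`; in particular, if `H` is invertible, the gradient
vanishes iff `λ₀ = ∑_a c_a`. -/
theorem lower_bound_stationary_at_vmp_update {k m : ℕ} (U : Set (Fin k → ℝ))
    (hU : IsOpen U) (h : (Fin k → ℝ) → ℝ) (l₀ : Fin k → ℝ) (hl₀ : l₀ ∈ U)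
    (hdiff : ∀ l ∈ U, DifferentiableAt ℝ h l)
    (hdiff2 : DifferentiableAt ℝ (fderiv ℝ h) l₀)
    (H : Matrix (Fin k) (Fin k) ℝ)
    (hH : ∀ i j, H i j = fderiv ℝ (fderiv ℝ h) l₀ (Pi.single i 1) (Pi.single j 1))
    (c : Fin m → Fin k → ℝ)
    (L : (Fin k → ℝ) → ℝ)
    (hL : ∀ l, L l = (∑ a, fderiv ℝ h l (c a)) - (fderiv ℝ h l l - h l)) :
    DifferentiableAt ℝ L l₀ ∧
    (∀ i, fderiv ℝ L l₀ (Pi.single i 1) = (H *ᵥ ((∑ a, c a) - l₀)) i) ∧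
    (IsUnit H →
      ((∀ i, fderiv ℝ L l₀ (Pi.single i 1) = 0) ↔ l₀ = ∑ a, c a)) :=
  lower_bound_stationary_at_vmp_update_general U h l₀ hl₀ hdiff hdiff2 H hH c L hL
end

section
/- Fix n ≥ 1, and for i = 1,…,n fix y_i ∈ ℝ^{n_i} and a real n_i×r matrix X_i; let σ² > 0 and let D be a symmetric positive definite r×r matrix. Set W_i := ((1/σ²)·X_iᵀX_i + D^{−1})^{−1} D^{−1} for each i, and define f : ℝ^r × (ℝ^r)^n → ℝ by f(β, α̃_1,…,α̃_n) = ∑_{i=1}^n [ (1/(2σ²))·‖y_i − X_iW_iβ − X_iα̃_i‖² + (1/2)·(α̃_i − (I − W_i)β)ᵀ D^{−1} (α̃_i − (I − W_i)β) ]. Then f separates additively in β and the α̃_i: there exist functions g : ℝ^r → ℝ and h_1,…,h_n : ℝ^r → ℝ such that f(β, α̃_1,…,α̃_n) = g(β) + ∑_{i=1}^n h_i(α̃_i) for all β ∈ ℝ^r and all α̃_1,…,α̃_n ∈ ℝ^r. -/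
/-!
Expanding the two quadratic forms in the `i`-th summand, the only terms mixing `β` and `α̃_i` are
`σ⁻² (X_iW_iβ)ᵀ(X_iα̃_i)` and `-((I - W_i)β)ᵀ D⁻¹ α̃_i`. They cancel exactly when
`σ⁻² (X_iW_i)ᵀX_i = (I - W_i)ᵀD⁻¹`, and for `W_i = M_i⁻¹D⁻¹` with the symmetric invertible
`M_i = σ⁻² X_iᵀX_i + D⁻¹` this reads `W_iᵀ(M_i - D⁻¹) = D⁻¹ - W_iᵀD⁻¹`, i.e. `W_iᵀM_i = D⁻¹`.
-/

open Matrix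

theorem smul_transpose_mul_eq_of_inv_mul {R m k : Type*} [CommRing R] [Fintype m] [Fintype k]
    [DecidableEq k] {c : R} (X : Matrix m k R) {E : Matrix k k R}
    (hE : Eᵀ = E) (hM : IsUnit (c • (Xᵀ * X) + E)) :
    c • ((X * ((c • (Xᵀ * X) + E)⁻¹ * E))ᵀ * X) = (1 - (c • (Xᵀ * X) + E)⁻¹ * E)ᵀ * E := by
  set M := c • (Xᵀ * X) + E with hM_def
  have hM_symm : Mᵀ = M := by simp [hM_def, hE]
  have hW : (M⁻¹ * E)ᵀ * M = E := by
    rw [transpose_mul, transpose_nonsing_inv, hE, hM_symm, Matrix.mul_assoc,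
      nonsing_inv_mul _ ((isUnit_iff_isUnit_det M).mp hM), Matrix.mul_one]
  calc c • ((X * (M⁻¹ * E))ᵀ * X) = (M⁻¹ * E)ᵀ * (M - E) := by
        rw [transpose_mul, hM_def, add_sub_cancel_right, Matrix.mul_smul, Matrix.mul_assoc]
    _ = (1 - M⁻¹ * E)ᵀ * E := by
        rw [Matrix.mul_sub, hW, transpose_sub, transpose_one, Matrix.sub_mul, Matrix.one_mul]

theorem mulVec_dotProduct_mulVec {R m k p : Type*} [CommSemiring R] [Fintype m] [Fintype k]
    [Fintype p] (A : Matrix m p R) (X : Matrix m k R) (u : p → R) (v : k → R) :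
    (A *ᵥ u) ⬝ᵥ (X *ᵥ v) = u ⬝ᵥ ((Aᵀ * X) *ᵥ v) := by
  rw [← mulVec_mulVec, dotProduct_mulVec u, vecMul_transpose]

theorem exists_additive_split_of_smul_transpose_mul_eq {m k p : Type*} [Fintype m] [Fintype k]
    [Fintype p] (s : ℝ) (y : m → ℝ) (A : Matrix m p ℝ) (X : Matrix m k ℝ) (B : Matrix k p ℝ)
    {E : Matrix k k ℝ} (hE : Eᵀ = E) (hcross : (1 / s) • (Aᵀ * X) = Bᵀ * E) :
    ∃ (g : (p → ℝ) → ℝ) (h : (k → ℝ) → ℝ), ∀ β α,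
      1 / (2 * s) * ((y - A *ᵥ β - X *ᵥ α) ⬝ᵥ (y - A *ᵥ β - X *ᵥ α))
        + 1 / 2 * ((α - B *ᵥ β) ⬝ᵥ (E *ᵥ (α - B *ᵥ β))) = g β + h α := by
  refine ⟨fun β => 1 / (2 * s) * ((y - A *ᵥ β) ⬝ᵥ (y - A *ᵥ β))
      + 1 / 2 * ((B *ᵥ β) ⬝ᵥ (E *ᵥ (B *ᵥ β))),
    fun α => 1 / (2 * s) * ((X *ᵥ α) ⬝ᵥ (X *ᵥ α)) - 1 / s * (y ⬝ᵥ (X *ᵥ α))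
      + 1 / 2 * (α ⬝ᵥ (E *ᵥ α)), fun β α => ?_⟩
  have hcancel : 1 / s * ((A *ᵥ β) ⬝ᵥ (X *ᵥ α)) = (B *ᵥ β) ⬝ᵥ (E *ᵥ α) := by
    rw [mulVec_dotProduct_mulVec, mulVec_dotProduct_mulVec, ← hcross, smul_mulVec,
      dotProduct_smul, smul_eq_mul]
  have hE_dot : α ⬝ᵥ (E *ᵥ B *ᵥ β) = (B *ᵥ β) ⬝ᵥ (E *ᵥ α) := by
    rw [dotProduct_mulVec, dotProduct_comm, ← vecMul_transpose E, hE]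
  simp only [mulVec_sub, dotProduct_sub, sub_dotProduct, dotProduct_comm (X *ᵥ α),
    dotProduct_comm (A *ᵥ β) y, hE_dot]
  linear_combination hcancel

theorem posDef_smul_transpose_mul_self_add {m k : Type*} [Fintype m] [Fintype k] {c : ℝ}
    (hc : 0 ≤ c) (X : Matrix m k ℝ) {E : Matrix k k ℝ} (hE : E.PosDef) :
    (c • (Xᵀ * X) + E).PosDef :=
  PosDef.posSemidef_add (PosSemidef.smul (posSemidef_conjTranspose_mul_self X) hc) hE

theorem posterior_separates_in_pnc_parametrization_general
    {n r : ℕ} (ni : Fin n → ℕ)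
    (y : (i : Fin n) → Fin (ni i) → ℝ)
    (X : (i : Fin n) → Matrix (Fin (ni i)) (Fin r) ℝ)
    (σ2 : ℝ) (hσ2 : 0 < σ2)
    (D : Matrix (Fin r) (Fin r) ℝ) (hD : D.PosDef)
    (W : Fin n → Matrix (Fin r) (Fin r) ℝ)
    (hW : ∀ i, W i = ((1 / σ2) • ((X i)ᵀ * X i) + D⁻¹)⁻¹ * D⁻¹)
    (f : (Fin r → ℝ) → (Fin n → Fin r → ℝ) → ℝ)
    (hf : ∀ (β : Fin r → ℝ) (α : Fin n → Fin r → ℝ),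
      f β α = ∑ i,
        ((1 / (2 * σ2)) *
            ((y i - (X i * W i) *ᵥ β - X i *ᵥ α i) ⬝ᵥ (y i - (X i * W i) *ᵥ β - X i *ᵥ α i))
          + (1 / 2) *
            ((α i - (1 - W i) *ᵥ β) ⬝ᵥ (D⁻¹ *ᵥ (α i - (1 - W i) *ᵥ β))))) :
    ∃ (g : (Fin r → ℝ) → ℝ) (h : Fin n → (Fin r → ℝ) → ℝ),
      ∀ (β : Fin r → ℝ) (α : Fin n → Fin r → ℝ),
        f β α = g β + ∑ i, h i (α i) := by
  have hDinv_symm : (D⁻¹)ᵀ = D⁻¹ := by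
    rw [transpose_nonsing_inv, ← conjTranspose_eq_transpose_of_trivial, hD.isHermitian.eq]
  have hcross : ∀ i, (1 / σ2) • ((X i * W i)ᵀ * X i) = (1 - W i)ᵀ * D⁻¹ := fun i => by
    rw [hW i]
    exact smul_transpose_mul_eq_of_inv_mul (X i) hDinv_symm
      (posDef_smul_transpose_mul_self_add (by positivity) (X i) hD.inv).isUnit
  choose g h hgh using fun i => exists_additive_split_of_smul_transpose_mul_eq σ2 (y i)
    (X i * W i) (X i) (1 - W i) hDinv_symm (hcross i)
  refine ⟨fun β => ∑ i, g i β, h, fun β α => ?_⟩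
  rw [hf, ← Finset.sum_add_distrib]
  exact Finset.sum_congr rfl fun i _ => hgh i β (α i)

/-- **Exact factorization of the partially noncentered posterior.**
With the optimal tuning matrices `W_i = ((1/σ²) X_iᵀX_i + D⁻¹)⁻¹ D⁻¹`, the negative
log unnormalized posterior
`f(β, α̃) = ∑_i [(1/(2σ²))‖y_i - X_iW_iβ - X_iα̃_i‖² +
              (1/2)(α̃_i - (I-W_i)β)ᵀ D⁻¹ (α̃_i - (I-W_i)β)]`
separates additively in `β` and the `α̃_i`'s:
`f(β, α̃₁,…,α̃_n) = g(β) + ∑_i h_i(α̃_i)`. -/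
theorem posterior_separates_in_pnc_parametrization
    {n r : ℕ} (ni : Fin n → ℕ) (hn : 1 ≤ n)
    (y : (i : Fin n) → Fin (ni i) → ℝ)
    (X : (i : Fin n) → Matrix (Fin (ni i)) (Fin r) ℝ)
    (σ2 : ℝ) (hσ2 : 0 < σ2)
    (D : Matrix (Fin r) (Fin r) ℝ) (hD : D.PosDef)
    (W : Fin n → Matrix (Fin r) (Fin r) ℝ)
    (hW : ∀ i, W i = ((1 / σ2) • ((X i)ᵀ * X i) + D⁻¹)⁻¹ * D⁻¹)
    (f : (Fin r → ℝ) → (Fin n → Fin r → ℝ) → ℝ)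
    (hf : ∀ (β : Fin r → ℝ) (α : Fin n → Fin r → ℝ),
      f β α = ∑ i,
        ((1 / (2 * σ2)) *
            ((y i - (X i * W i) *ᵥ β - X i *ᵥ α i) ⬝ᵥ (y i - (X i * W i) *ᵥ β - X i *ᵥ α i))
          + (1 / 2) *
            ((α i - (1 - W i) *ᵥ β) ⬝ᵥ (D⁻¹ *ᵥ (α i - (1 - W i) *ᵥ β))))) :
    ∃ (g : (Fin r → ℝ) → ℝ) (h : Fin n → (Fin r → ℝ) → ℝ),
      ∀ (β : Fin r → ℝ) (α : Fin n → Fin r → ℝ),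
        f β α = g β + ∑ i, h i (α i) :=
  posterior_separates_in_pnc_parametrization_general ni y X σ2 hσ2 D hD W hW f hf
end
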